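/- arXiv:1702.02754 — 4 statements merged into one kernel-verified Lean document; each statement's English description precedes it below -/
import Mathlib

section
/- Fix δ ≥ 0 and λ > δ. For a probability measure μ on ℕ, define π^μ(x) = (1/Z_μ)·(1+δ)^x / ∏_{h=0}^{x-1}(1 + λ·μ[0,h)), with Z_μ the normalizing constant (assumed finite). If μ_n → μ pointwise with all μ_n, μ stochastically dominated by a fixed measure π* with ∑_x (1+δ)^x/∏_{h<x}(1+λ·π*[0,h)) < ∞, then π^{μ_n}(x) → π^μ(x) for every x ∈ ℕ. -/
open Filter

/-- `μ[0,h) = ∑_{y<h} μ(y)`. -/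
def cdfLt (μ : ℕ → ℝ) (h : ℕ) : ℝ := ∑ y ∈ Finset.range h, μ y

/-- Unnormalized detailed-balance weight of the birth-death chain driven by `μ`. -/
noncomputable def bdTerm (δ lam : ℝ) (μ : ℕ → ℝ) (x : ℕ) : ℝ :=
  (1 + δ) ^ x / ∏ h ∈ Finset.range x, (1 + lam * cdfLt μ h)

/-- The stationary distribution `π^μ` of the birth-death chain driven by `μ`. -/
noncomputable def bdPiMu (δ lam : ℝ) (μ : ℕ → ℝ) (x : ℕ) : ℝ :=
  bdTerm δ lam μ x / ∑' k : ℕ, bdTerm δ lam μ k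

lemma bdTerm_nonneg {δ lam : ℝ} (hδ : 0 ≤ δ) (hlam : 0 ≤ lam) {ν : ℕ → ℝ}
    (hν : ∀ x, 0 ≤ ν x) (x : ℕ) : 0 ≤ bdTerm δ lam ν x := by
  apply div_nonneg (pow_nonneg (by linarith) x)
  exact Finset.prod_nonneg fun h _ => by
    have : 0 ≤ cdfLt ν h := Finset.sum_nonneg fun y _ => hν y
    nlinarith

lemma one_le_factor {lam : ℝ} (hlam : 0 ≤ lam) {ν : ℕ → ℝ}
    (hν : ∀ x, 0 ≤ ν x) (h : ℕ) : 1 ≤ 1 + lam * cdfLt ν h := by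
  have : 0 ≤ cdfLt ν h := Finset.sum_nonneg fun y _ => hν y
  nlinarith

lemma bdTerm_le {δ lam : ℝ} (hδ : 0 ≤ δ) (hlam : 0 ≤ lam) {ν pistar : ℕ → ℝ}
    (hps : ∀ x, 0 ≤ pistar x)
    (hdom : ∀ h, ∑ y ∈ Finset.range (h + 1), pistar y ≤ ∑ y ∈ Finset.range (h + 1), ν y)
    (x : ℕ) : bdTerm δ lam ν x ≤ bdTerm δ lam pistar x := by
  have hcdf : ∀ h, cdfLt pistar h ≤ cdfLt ν h := by
    intro h
    cases h with
    | zero => simp [cdfLt]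
    | succ k => exact hdom k
  unfold bdTerm
  apply div_le_div_of_nonneg_left (pow_nonneg (by linarith) x)
  · exact Finset.prod_pos fun h _ => lt_of_lt_of_le one_pos (one_le_factor hlam hps h)
  · apply Finset.prod_le_prod
    · intro h _
      have := one_le_factor hlam hps h
      linarith
    · intro h _
      have := hcdf h
      nlinarith

/-- Continuity of `μ ↦ π^μ`: if `μ_n → μ` pointwise, all dominated stochastically
by a fixed `π*` whose associated series is summable, then `π^{μ_n}(x) → π^μ(x)`. -/
theorem piMu_continuous (δ lam : ℝ) (hδ : 0 ≤ δ) (hlam : δ < lam)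
    (μn : ℕ → ℕ → ℝ) (μ pistar : ℕ → ℝ)
    (hnn : ∀ n x, 0 ≤ μn n x) (hμnn : ∀ x, 0 ≤ μ x) (hpsnn : ∀ x, 0 ≤ pistar x)
    (htot : ∀ n, ∑' x, μn n x = 1) (hμtot : ∑' x, μ x = 1) (hpstot : ∑' x, pistar x = 1)
    (hconv : ∀ x, Tendsto (fun n => μn n x) atTop (nhds (μ x)))
    (hdomn : ∀ n h, ∑ y ∈ Finset.range (h + 1), pistar y ≤ ∑ y ∈ Finset.range (h + 1), μn n y)
    (hdom : ∀ h, ∑ y ∈ Finset.range (h + 1), pistar y ≤ ∑ y ∈ Finset.range (h + 1), μ y)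
    (hsum : Summable (bdTerm δ lam pistar)) :
    ∀ x : ℕ, Tendsto (fun n => bdPiMu δ lam (μn n) x) atTop (nhds (bdPiMu δ lam μ x)) := by
  have hlam0 : 0 ≤ lam := le_of_lt (lt_of_le_of_lt hδ hlam)
  -- termwise convergence of bdTerm
  have hterm : ∀ x, Tendsto (fun n => bdTerm δ lam (μn n) x) atTop
      (nhds (bdTerm δ lam μ x)) := by
    intro x
    unfold bdTerm
    apply Tendsto.div tendsto_const_nhds
    · apply tendsto_finset_prod
      intro h _
      apply Tendsto.const_add
      apply Tendsto.const_mul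
      unfold cdfLt
      exact tendsto_finset_sum _ fun y _ => hconv y
    · have := Finset.prod_pos (f := fun h => 1 + lam * cdfLt μ h) (s := Finset.range x)
        fun h _ => lt_of_lt_of_le one_pos (one_le_factor hlam0 hμnn h)
      exact ne_of_gt this
  -- convergence of the normalizing sums via dominated convergence
  have htsum : Tendsto (fun n => ∑' k, bdTerm δ lam (μn n) k) atTop
      (nhds (∑' k, bdTerm δ lam μ k)) := by
    apply tendsto_tsum_of_dominated_convergence hsum hterm
    filter_upwards with n k
    rw [Real.norm_eq_abs, abs_of_nonneg (bdTerm_nonneg hδ hlam0 (hnn n) k)]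
    exact bdTerm_le hδ hlam0 hpsnn (hdomn n) k
  -- the limit sum is positive
  have hμsum : Summable (bdTerm δ lam μ) :=
    Summable.of_nonneg_of_le (bdTerm_nonneg hδ hlam0 hμnn) (bdTerm_le hδ hlam0 hpsnn hdom) hsum
  have hpos : 0 < ∑' k, bdTerm δ lam μ k := by
    have h0 : (1 : ℝ) ≤ bdTerm δ lam μ 0 := by simp [bdTerm]
    calc (0:ℝ) < 1 := one_pos
    _ ≤ bdTerm δ lam μ 0 := h0
    _ ≤ ∑' k, bdTerm δ lam μ k := Summable.le_tsum hμsum 0 fun k _ => bdTerm_nonneg hδ hlam0 hμnn k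
  intro x
  exact Tendsto.div (hterm x) htsum (ne_of_gt hpos)
end

section
/- Fix δ ≥ 0 and λ > δ. Suppose μ is a probability measure on ℕ satisfying the fixed-point (detailed balance) relation (1+δ)·μ(x) = (1 + λ·μ[0,x])·μ(x+1) for all x ∈ ℕ. Then necessarily λ > 2δ; in particular, if λ ≤ 2δ there is no such fixed point. -/
/-- If `μ` is a probability measure on `ℕ` satisfying the detailed-balance
fixed-point relation `(1+δ)·μ(x) = (1 + λ·μ[0,x])·μ(x+1)` for all `x`, then
necessarily `λ > 2δ`; in particular for `λ ≤ 2δ` there is no such fixed point. -/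
theorem no_fixed_point_le (δ lam : ℝ) (hδ : 0 ≤ δ) (hlam : δ < lam)
    (μ : ℕ → ℝ) (hnn : ∀ x, 0 ≤ μ x) (hsum : Summable μ) (htot : ∑' x, μ x = 1)
    (hfix : ∀ x : ℕ,
      (1 + δ) * μ x = (1 + lam * ∑ y ∈ Finset.range (x + 1), μ y) * μ (x + 1)) :
    2 * δ < lam := by
  have hlam0 : 0 < lam := lt_of_le_of_lt hδ hlam
  set F : ℕ → ℝ := fun x => ∑ y ∈ Finset.range (x + 1), μ y with hF
  have hFnn : ∀ x, 0 ≤ F x := fun x =>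
    Finset.sum_nonneg fun i _ => hnn i
  have hFle : ∀ x, F x ≤ 1 := by
    intro x
    calc F x ≤ ∑' y, μ y := Summable.sum_le_tsum _ (fun i _ => hnn i) hsum
    _ = 1 := htot
  have hμle : ∀ x, μ x ≤ 1 := by
    intro x
    calc μ x ≤ ∑' y, μ y := Summable.le_tsum hsum x (fun i _ => hnn i)
    _ = 1 := htot
  -- summability of shifted sequence
  have hshift : Summable (fun x => μ (x + 1)) := (summable_nat_add_iff 1).mpr hsum
  -- summability of F x * μ (x+1)
  have hSsum : Summable (fun x => F x * μ (x + 1)) := by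
    apply Summable.of_nonneg_of_le (fun x => mul_nonneg (hFnn x) (hnn (x + 1)))
      (fun x => ?_) hshift
    calc F x * μ (x + 1) ≤ 1 * μ (x + 1) :=
      mul_le_mul_of_nonneg_right (hFle x) (hnn (x + 1))
    _ = μ (x + 1) := one_mul _
  set S : ℝ := ∑' x, F x * μ (x + 1) with hSdef
  -- summability of squares
  have hsqsum : Summable (fun x => μ x ^ 2) := by
    apply Summable.of_nonneg_of_le (fun x => sq_nonneg _) (fun x => ?_) hsum
    calc μ x ^ 2 = μ x * μ x := sq (μ x)
    _ ≤ 1 * μ x := mul_le_mul_of_nonneg_right (hμle x) (hnn x)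
    _ = μ x := one_mul _
  set T : ℝ := ∑' x, μ x ^ 2 with hTdef
  have hTnn : 0 ≤ T := tsum_nonneg fun x => sq_nonneg _
  -- Identity A : lam * S = δ + μ 0
  have hA : lam * S = δ + μ 0 := by
    have h1 : ∑' x, (1 + δ) * μ x = 1 + δ := by
      rw [tsum_mul_left, htot, mul_one]
    have h2 : ∑' x, (1 + lam * F x) * μ (x + 1)
        = (1 - μ 0) + lam * S := by
      have hexp : ∀ x, (1 + lam * F x) * μ (x + 1)
          = μ (x + 1) + lam * (F x * μ (x + 1)) := by
        intro x; ring
      rw [tsum_congr hexp, Summable.tsum_add hshift ((hSsum).mul_left lam),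
        tsum_mul_left, ← hSdef]
      have : ∑' x, μ (x + 1) = 1 - μ 0 := by
        have := Summable.tsum_eq_zero_add hsum
        rw [htot] at this
        linarith
      rw [this]
    have h3 : ∑' x, (1 + δ) * μ x = ∑' x, (1 + lam * F x) * μ (x + 1) :=
      tsum_congr fun x => hfix x
    rw [h1, h2] at h3
    linarith
  -- Identity B : 2 * S = 1 - T
  have hB : 2 * S = 1 - T := by
    set g : ℕ → ℝ := fun x => 2 * (F x * μ (x + 1)) + μ (x + 1) ^ 2 with hg
    have hgsum : Summable g := ((hSsum.mul_left 2).add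
      ((summable_nat_add_iff 1).mpr hsqsum))
    have hpartial : ∀ N, ∑ x ∈ Finset.range N, g x = F N ^ 2 - μ 0 ^ 2 := by
      intro N
      induction N with
      | zero => simp [hF]
      | succ n ih =>
        rw [Finset.sum_range_succ, ih]
        have : F (n + 1) = F n + μ (n + 1) := by
          simp [hF, Finset.sum_range_succ]
        rw [this, hg]; ring
    have hlim1 : Filter.Tendsto (fun N => ∑ x ∈ Finset.range N, g x)
        Filter.atTop (nhds (∑' x, g x)) := hgsum.hasSum.tendsto_sum_nat
    have hlim2 : Filter.Tendsto (fun N => F N ^ 2 - μ 0 ^ 2)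
        Filter.atTop (nhds (1 - μ 0 ^ 2)) := by
      have hFlim : Filter.Tendsto F Filter.atTop (nhds 1) := by
        have h0 : Filter.Tendsto (fun N => ∑ y ∈ Finset.range N, μ y)
            Filter.atTop (nhds 1) := by
          have := hsum.hasSum.tendsto_sum_nat
          rwa [htot] at this
        exact h0.comp (Filter.tendsto_add_atTop_nat 1)
      simpa using ((hFlim.pow 2).sub (tendsto_const_nhds (x := μ 0 ^ 2)))
    have heq : ∑' x, g x = 1 - μ 0 ^ 2 := by
      apply tendsto_nhds_unique hlim1
      simpa only [hpartial] using hlim2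
    have hgval : ∑' x, g x = 2 * S + (T - μ 0 ^ 2) := by
      rw [hg, Summable.tsum_add (hSsum.mul_left 2) ((summable_nat_add_iff 1).mpr hsqsum),
        tsum_mul_left, ← hSdef]
      have : ∑' x, μ (x + 1) ^ 2 = T - μ 0 ^ 2 := by
        have := Summable.tsum_eq_zero_add hsqsum
        rw [← hTdef] at this
        linarith
      rw [this]
    rw [hgval] at heq
    linarith
  -- Conclusion: 2δ = lam * (1 - T) - 2 μ 0 < lam  iff  lam * T + 2 μ 0 > 0
  have hkey : 2 * δ = lam * (1 - T) - 2 * μ 0 := by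
    have : lam * (2 * S) = lam * (1 - T) := by rw [hB]
    linarith [hA]
  rcases eq_or_lt_of_le (hnn 0) with h0 | h0
  · -- μ 0 = 0, then T > 0
    have hTpos : 0 < T := by
      by_contra h
      push_neg at h
      have hT0 : T = 0 := le_antisymm h hTnn
      have hall : ∀ x, μ x ^ 2 = 0 := by
        intro x
        have h1 : μ x ^ 2 ≤ T := Summable.le_tsum hsqsum x (fun i _ => sq_nonneg _)
        have := sq_nonneg (μ x)
        linarith
      have : ∀ x, μ x = 0 := fun x => pow_eq_zero_iff (n := 2) (by norm_num) |>.mp (hall x)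
      have : (1 : ℝ) = 0 := by
        rw [← htot]
        simp [this]
      norm_num at this
    nlinarith
  · nlinarith
end

section
/- The measure π₂ (product-geometric form with ratios (1+δ)²/(1+λ/2) in x and (1+δ)/(1+λ/2) in y, with boundary weights halved at y = 0) satisfies the stationary equation ∑_{(x,y)} L²f(x,y)·π₂(x,y) = 0 for all bounded functions f, where L² is the generator of the gap process G² of two interacting particles: from (g₁,g₂) with g₁,g₂ > 0, jumps to (g₁+1,g₂-1) at rate 1+δ, (g₁,g₂-1) at rate 1+λ/2, (g₁-1,g₂+1) at rate 1, (g₁,g₂+1) at rate 1+δ; from (0,g₂), g₂>0: to (1,g₂-1) at rate 1+δ, (0,g₂-1) at rate 1+λ/2, (0,g₂+1) at rate 1+δ; from (g₁,0), g₁>0: to (g₁-1,1) at rate 2, (g₁,1) at rate 2+2δ; from (0,0): to (0,1) at rate 2+2δ. -/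
noncomputable def r1 (δ lam : ℝ) : ℝ := (1 + δ) ^ 2 / (1 + lam / 2)

noncomputable def r2 (δ lam : ℝ) : ℝ := (1 + δ) / (1 + lam / 2)

noncomputable def piC (δ lam : ℝ) : ℝ :=
  2 * (lam / 2 - δ) * (lam / 2 - 2 * δ - δ ^ 2) / ((lam / 2 + δ + 2) * (lam / 2 + 1))

/-- The candidate stationary measure `π₂` of the two-particle gap process. -/
noncomputable def piTwo (δ lam : ℝ) : ℕ × ℕ → ℝ
  | (0, 0) => piC δ lam / 2
  | (0, y + 1) => piC δ lam * r2 δ lam ^ (y + 1)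
  | (x + 1, 0) => piC δ lam / 2 * r1 δ lam ^ (x + 1)
  | (x + 1, y + 1) => piC δ lam * r1 δ lam ^ (x + 1) * r2 δ lam ^ (y + 1)

/-- The generator `L²` of the gap process `G²` of two interacting particles. -/
noncomputable def gapGen (δ lam : ℝ) (f : ℕ × ℕ → ℝ) : ℕ × ℕ → ℝ
  | (0, 0) => (2 + 2 * δ) * (f (0, 1) - f (0, 0))
  | (0, y + 1) =>
      (1 + δ) * (f (1, y) - f (0, y + 1)) + (1 + lam / 2) * (f (0, y) - f (0, y + 1)) +
        (1 + δ) * (f (0, y + 2) - f (0, y + 1))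
  | (x + 1, 0) =>
      2 * (f (x, 1) - f (x + 1, 0)) + (2 + 2 * δ) * (f (x + 1, 1) - f (x + 1, 0))
  | (x + 1, y + 1) =>
      (1 + δ) * (f (x + 2, y) - f (x + 1, y + 1)) +
        (1 + lam / 2) * (f (x + 1, y) - f (x + 1, y + 1)) +
        1 * (f (x, y + 2) - f (x + 1, y + 1)) +
        (1 + δ) * (f (x + 1, y + 2) - f (x + 1, y + 1))

/-- Backward rate of a "diagonal" edge, out of `(x+1, y)` towards `(x, y+1)`. -/
noncomputable def rAb : ℕ → ℝ := fun y => if y = 0 then 2 else 1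

/-- Backward rate of a "vertical" edge, out of `(x, y)` towards `(x, y+1)`. -/
noncomputable def rBb (δ : ℝ) : ℕ → ℝ := fun y => if y = 0 then 2 + 2 * δ else 1 + δ

lemma hr1r2 (δ lam : ℝ) : r1 δ lam = (1 + δ) * r2 δ lam := by
  unfold r1 r2; ring

lemma hcr2 (δ lam : ℝ) (h0 : (1:ℝ) + lam / 2 ≠ 0) : (1 + lam / 2) * r2 δ lam = 1 + δ := by
  unfold r2; rw [mul_comm, div_mul_cancel₀ _ h0]

/-- Detailed balance across diagonal edges. -/
lemma balA (δ lam : ℝ) (x y : ℕ) :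
    (1 + δ) * piTwo δ lam (x, y + 1) = rAb y * piTwo δ lam (x + 1, y) := by
  match x, y with
  | 0, 0 => norm_num [piTwo, rAb, hr1r2]; ring
  | 0, y+1 => norm_num [piTwo, rAb, hr1r2]; ring
  | x+1, 0 => norm_num [piTwo, rAb, hr1r2]; ring
  | x+1, y+1 => norm_num [piTwo, rAb, hr1r2]; ring

/-- Detailed balance across vertical edges. -/
lemma balB (δ lam : ℝ) (h0 : (1:ℝ) + lam / 2 ≠ 0) (x y : ℕ) :
    (1 + lam / 2) * piTwo δ lam (x, y + 1) = rBb δ y * piTwo δ lam (x, y) := by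
  have h2 := hcr2 δ lam h0
  match x, y with
  | 0, 0 =>
      norm_num [piTwo, rBb]
      linear_combination (piC δ lam) * h2
  | 0, y+1 =>
      norm_num [piTwo, rBb]
      linear_combination (piC δ lam * r2 δ lam ^ (y + 1)) * h2
  | x+1, 0 =>
      norm_num [piTwo, rBb]
      linear_combination (piC δ lam * r1 δ lam ^ (x + 1)) * h2
  | x+1, y+1 =>
      norm_num [piTwo, rBb]
      linear_combination (piC δ lam * r1 δ lam ^ (x + 1) * r2 δ lam ^ (y + 1)) * h2

/-- Diagonal-forward flow term out of `p`. -/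
noncomputable def tA1 (δ lam : ℝ) (f : ℕ × ℕ → ℝ) : ℕ × ℕ → ℝ := fun p =>
  if p.2 = 0 then 0 else (1 + δ) * piTwo δ lam p * (f (p.1 + 1, p.2 - 1) - f p)

/-- Diagonal-backward flow term out of `p`. -/
noncomputable def tA2 (δ lam : ℝ) (f : ℕ × ℕ → ℝ) : ℕ × ℕ → ℝ := fun p =>
  if p.1 = 0 then 0 else rAb p.2 * piTwo δ lam p * (f (p.1 - 1, p.2 + 1) - f p)

/-- Vertical-forward flow term out of `p`. -/
noncomputable def tB1 (δ lam : ℝ) (f : ℕ × ℕ → ℝ) : ℕ × ℕ → ℝ := fun p =>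
  if p.2 = 0 then 0 else (1 + lam / 2) * piTwo δ lam p * (f (p.1, p.2 - 1) - f p)

/-- Vertical-backward flow term out of `p`. -/
noncomputable def tB2 (δ lam : ℝ) (f : ℕ × ℕ → ℝ) : ℕ × ℕ → ℝ := fun p =>
  rBb δ p.2 * piTwo δ lam p * (f (p.1, p.2 + 1) - f p)

/-- Decomposition of the generator term into the four flow terms. -/
lemma decomp (δ lam : ℝ) (f : ℕ × ℕ → ℝ) (p : ℕ × ℕ) :
    gapGen δ lam f p * piTwo δ lam p =
      tA1 δ lam f p + tA2 δ lam f p + tB1 δ lam f p + tB2 δ lam f p := by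
  obtain ⟨x, y⟩ := p
  match x, y with
  | 0, 0 => norm_num [gapGen, tA1, tA2, tB1, tB2, rAb, rBb]; ring
  | 0, y+1 => norm_num [gapGen, tA1, tA2, tB1, tB2, rAb, rBb]; ring
  | x+1, 0 => norm_num [gapGen, tA1, tA2, tB1, tB2, rAb, rBb]; ring
  | x+1, y+1 => norm_num [gapGen, tA1, tA2, tB1, tB2, rAb, rBb]; ring

/-- `π₂` satisfies the stationary equation `∑ L²f · π₂ = 0` for all bounded `f`. -/
theorem piTwo_stationary (δ lam : ℝ) (hδ : 0 ≤ δ) (hlam : 2 * δ ^ 2 + 4 * δ < lam)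
    (f : ℕ × ℕ → ℝ) (hf : ∃ M : ℝ, ∀ p, |f p| ≤ M) :
    ∑' p : ℕ × ℕ, gapGen δ lam f p * piTwo δ lam p = 0 := by
  obtain ⟨M, hM⟩ := hf
  have hM0 : 0 ≤ M := (abs_nonneg _).trans (hM (0, 0))
  have hlam0 : 0 < lam := lt_of_le_of_lt (by positivity) hlam
  have hc : (0:ℝ) < 1 + lam / 2 := by linarith
  have hc' : (1:ℝ) + lam / 2 ≠ 0 := ne_of_gt hc
  -- properties of the ratios
  have hr1n : 0 ≤ r1 δ lam := div_nonneg (by positivity) hc.le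
  have hr2n : 0 ≤ r2 δ lam := div_nonneg (by linarith) hc.le
  have hr1l : r1 δ lam < 1 := by
    rw [r1, div_lt_one hc]; nlinarith
  have hr2l : r2 δ lam < 1 := by
    rw [r2, div_lt_one hc]; nlinarith
  -- the dominating geometric function
  set g : ℕ × ℕ → ℝ := fun p => r1 δ lam ^ p.1 * r2 δ lam ^ p.2 with hg
  have hgs : Summable g :=
    (summable_geometric_of_lt_one hr1n hr1l).mul_of_nonneg
      (summable_geometric_of_lt_one hr2n hr2l)
      (fun n => pow_nonneg hr1n n) (fun n => pow_nonneg hr2n n)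
  have hgnn : ∀ p, 0 ≤ g p := fun p => mul_nonneg (pow_nonneg hr1n _) (pow_nonneg hr2n _)
  -- bound on the measure
  have hpi : ∀ p, |piTwo δ lam p| ≤ |piC δ lam| * g p := by
    rintro ⟨x | x, y | y⟩
    · simp only [piTwo, hg, pow_zero, mul_one, abs_div, abs_two]
      linarith [abs_nonneg (piC δ lam)]
    · simp only [piTwo, hg, pow_zero, abs_mul, abs_pow, abs_of_nonneg hr2n, one_mul]
      exact le_of_eq (by ring)
    · simp only [piTwo, hg, pow_zero, mul_one, abs_mul, abs_div, abs_pow,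
        abs_of_nonneg hr1n]
      have : |piC δ lam| / |(2:ℝ)| ≤ |piC δ lam| := by
        rw [abs_two]; linarith [abs_nonneg (piC δ lam), half_le_self (abs_nonneg (piC δ lam))]
      exact mul_le_mul_of_nonneg_right this (pow_nonneg hr1n _)
    · simp only [piTwo, hg, abs_mul, abs_pow, abs_of_nonneg hr1n, abs_of_nonneg hr2n]
      exact le_of_eq (by ring)
  -- uniform bound on rates
  set R : ℝ := 2 + 2 * δ + lam with hR
  have hRa : ∀ y, |rAb y| ≤ R := by
    intro y; rw [rAb]; split <;> rw [abs_of_nonneg (by norm_num)] <;> simp [hR] <;> linarith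
  have hRb : ∀ y, |rBb δ y| ≤ R := by
    intro y; rw [rBb]; split <;> rw [abs_of_nonneg (by linarith)] <;> linarith
  have hRc : |1 + δ| ≤ R := by rw [abs_of_nonneg (by linarith)]; linarith
  have hRd : |1 + lam / 2| ≤ R := by rw [abs_of_nonneg (by linarith)]; linarith
  have hR0 : 0 ≤ R := by linarith
  -- a generic summability criterion for flow terms
  set K : ℝ := R * |piC δ lam| * (2 * M) with hK
  have hK0 : 0 ≤ K := by
    apply mul_nonneg (mul_nonneg hR0 (abs_nonneg _)); linarith
  have key : ∀ (F : ℕ × ℕ → ℝ),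
      (∀ p, F p = 0 ∨ ∃ (r : ℝ) (a : ℕ × ℕ), |r| ≤ R ∧ F p = r * piTwo δ lam p * (f a - f p)) →
      Summable F := by
    intro F hFform
    have hFb : ∀ p, |F p| ≤ K * g p := by
      intro p
      rcases hFform p with h | ⟨r, a, hr, h⟩
      · rw [h, abs_zero]; exact mul_nonneg hK0 (hgnn p)
      · rw [h, abs_mul, abs_mul]
        have h1 : |f a - f p| ≤ 2 * M := by
          calc |f a - f p| ≤ |f a| + |f p| := abs_sub _ _
            _ ≤ M + M := add_le_add (hM a) (hM p)
            _ = 2 * M := by ring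
        calc |r| * |piTwo δ lam p| * |f a - f p|
            ≤ R * (|piC δ lam| * g p) * (2 * M) := by
              apply mul_le_mul (mul_le_mul hr (hpi p) (abs_nonneg _) hR0) h1 (abs_nonneg _)
              exact mul_nonneg hR0 (mul_nonneg (abs_nonneg _) (hgnn p))
          _ = K * g p := by rw [hK]; ring
    exact Summable.of_abs <| Summable.of_nonneg_of_le (fun p => abs_nonneg _)
      hFb (hgs.mul_left K)
  have hsA1 : Summable (tA1 δ lam f) := by
    apply key; intro p; rw [tA1]
    split
    · exact Or.inl rfl
    · exact Or.inr ⟨1 + δ, (p.1 + 1, p.2 - 1), hRc, rfl⟩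
  have hsA2 : Summable (tA2 δ lam f) := by
    apply key; intro p; rw [tA2]
    split
    · exact Or.inl rfl
    · exact Or.inr ⟨rAb p.2, (p.1 - 1, p.2 + 1), hRa p.2, rfl⟩
  have hsB1 : Summable (tB1 δ lam f) := by
    apply key; intro p; rw [tB1]
    split
    · exact Or.inl rfl
    · exact Or.inr ⟨1 + lam / 2, (p.1, p.2 - 1), hRd, rfl⟩
  have hsB2 : Summable (tB2 δ lam f) := by
    apply key; intro p; rw [tB2]
    exact Or.inr ⟨rBb δ p.2, (p.1, p.2 + 1), hRb p.2, rfl⟩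
  -- split the total sum
  have hsplit : ∑' p : ℕ × ℕ, gapGen δ lam f p * piTwo δ lam p =
      (∑' p, tA1 δ lam f p) + (∑' p, tA2 δ lam f p) +
        (∑' p, tB1 δ lam f p) + (∑' p, tB2 δ lam f p) := by
    rw [tsum_congr (decomp δ lam f)]
    rw [Summable.tsum_add ((hsA1.add hsA2).add hsB1) hsB2, Summable.tsum_add (hsA1.add hsA2) hsB1,
      Summable.tsum_add hsA1 hsA2]
  -- reindexings along the injections (x,y) ↦ (x,y+1) and (x,y) ↦ (x+1,y)
  have he1 : Function.Injective (fun q : ℕ × ℕ => (q.1, q.2 + 1)) := by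
    intro a b h
    simpa [Prod.ext_iff] using h
  have he2 : Function.Injective (fun q : ℕ × ℕ => (q.1 + 1, q.2)) := by
    intro a b h
    simpa [Prod.ext_iff] using h
  have hrange1 : ∀ (F : ℕ × ℕ → ℝ), (∀ p : ℕ × ℕ, p.2 = 0 → F p = 0) →
      Function.support F ⊆ Set.range (fun q : ℕ × ℕ => (q.1, q.2 + 1)) := by
    intro F hF p hp
    rcases p with ⟨x, _ | y⟩
    · exact absurd (hF (x, 0) rfl) hp
    · exact ⟨(x, y), rfl⟩
  have hrange2 : Function.support (tA2 δ lam f) ⊆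
      Set.range (fun q : ℕ × ℕ => (q.1 + 1, q.2)) := by
    intro p hp
    rcases p with ⟨_ | x, y⟩
    · refine absurd ?_ hp; simp [tA2]
    · exact ⟨(x, y), rfl⟩
  have h1 : (∑' q : ℕ × ℕ, tA1 δ lam f (q.1, q.2 + 1)) = ∑' p, tA1 δ lam f p :=
    he1.tsum_eq (hrange1 _ (by intro p hp; simp [tA1, hp]))
  have h2 : (∑' q : ℕ × ℕ, tA2 δ lam f (q.1 + 1, q.2)) = ∑' p, tA2 δ lam f p :=
    he2.tsum_eq hrange2
  have h3 : (∑' q : ℕ × ℕ, tB1 δ lam f (q.1, q.2 + 1)) = ∑' p, tB1 δ lam f p :=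
    he1.tsum_eq (hrange1 _ (by intro p hp; simp [tB1, hp]))
  -- pointwise cancellation via detailed balance
  have hcancelA : ∀ q : ℕ × ℕ, tA1 δ lam f (q.1, q.2 + 1) = - tA2 δ lam f (q.1 + 1, q.2) := by
    rintro ⟨x, y⟩
    have hb := balA δ lam x y
    simp only [tA1, tA2, Nat.succ_ne_zero, ite_false, Nat.add_sub_cancel]
    linear_combination (f (x + 1, y) - f (x, y + 1)) * hb
  have hcancelB : ∀ q : ℕ × ℕ, tB1 δ lam f (q.1, q.2 + 1) = - tB2 δ lam f q := by
    rintro ⟨x, y⟩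
    have hb := balB δ lam hc' x y
    simp only [tB1, tB2, Nat.succ_ne_zero, ite_false, Nat.add_sub_cancel]
    linear_combination (f (x, y) - f (x, y + 1)) * hb
  -- conclude
  have hA : (∑' p, tA1 δ lam f p) = - ∑' p, tA2 δ lam f p := by
    rw [← h1, ← h2]
    rw [tsum_congr hcancelA, tsum_neg]
  have hB : (∑' p, tB1 δ lam f p) = - ∑' p, tB2 δ lam f p := by
    rw [← h3, tsum_congr hcancelB, tsum_neg]
  rw [hsplit, hA, hB]
  ring
end

section
/- Fix N ≥ 2 and δ ≥ 0. If λ < 2N²(δ+2)δ/(N(N-1)(δ+2) - 2δ) then there exists ε with 0 ≤ ε ≤ 3λ/(4N) such that both Nδ + εδ - λ(N-1)/2 > 0 and Nδ + εδ - λ(N-1)/2 + λ/N - 2ε > 0. -/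
/-- If `λ < 2N²(δ+2)δ/(N(N-1)(δ+2) - 2δ)` then there exists `0 ≤ ε ≤ 3λ/(4N)`
making both drift inequalities strict, so the linear Lyapunov function certifies
transience. -/
theorem transience_eps_exists (N : ℕ) (hN : 2 ≤ N) (δ lam : ℝ) (hδ : 0 ≤ δ)
    (hlam : 0 < lam)
    (h : lam < 2 * (N : ℝ) ^ 2 * (δ + 2) * δ / ((N : ℝ) * ((N : ℝ) - 1) * (δ + 2) - 2 * δ)) :
    ∃ ε : ℝ, 0 ≤ ε ∧ ε ≤ 3 * lam / (4 * N) ∧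
      0 < (N : ℝ) * δ + ε * δ - lam * ((N : ℝ) - 1) / 2 ∧
      0 < (N : ℝ) * δ + ε * δ - lam * ((N : ℝ) - 1) / 2 + lam / N - 2 * ε := by
  set n := (N : ℝ) with hn_def
  have hn : (2 : ℝ) ≤ n := by rw [hn_def]; exact_mod_cast hN
  have hn0 : (0 : ℝ) < n := by linarith
  have h2n : (2 : ℝ) ≤ n * (n - 1) := by nlinarith
  have hD : 0 < n * (n - 1) * (δ + 2) - 2 * δ := by nlinarith [mul_le_mul_of_nonneg_right h2n (by linarith : (0:ℝ) ≤ δ + 2)]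
  have hP : lam * (n * (n - 1) * (δ + 2) - 2 * δ) < 2 * n ^ 2 * (δ + 2) * δ :=
    (lt_div_iff₀ hD).mp h
  by_cases hA : 0 < n * δ - lam * (n - 1) / 2
  · refine ⟨0, le_refl 0, by positivity, by linarith, ?_⟩
    have : 0 < lam / n := div_pos hlam hn0
    linarith
  · push_neg at hA
    have hδpos : 0 < δ := by
      rcases hδ.lt_or_eq with h1 | h1
      · exact h1
      · exfalso; rw [← h1] at hP; nlinarith
    set ε₀ := (lam * (n - 1) / 2 - n * δ) / δ with hε₀def
    have hε₀nonneg : 0 ≤ ε₀ := div_nonneg (by linarith) hδ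
    have hε₀δ : ε₀ * δ = lam * (n - 1) / 2 - n * δ := div_mul_cancel₀ _ (ne_of_gt hδpos)
    have key : 2 * ε₀ < lam / n := by
      rw [show (2:ℝ) * ε₀ = 2 * (lam * (n - 1) / 2 - n * δ) / δ from by rw [hε₀def]; ring,
        div_lt_div_iff₀ hδpos hn0]
      nlinarith [hP, mul_nonneg (mul_nonneg hlam.le hδ) hδ]
    set t := (lam / n - 2 * ε₀) / 4 with ht_def
    have ht : 0 < t := by rw [ht_def]; linarith
    refine ⟨ε₀ + t, by linarith, ?_, ?_, ?_⟩
    · have : ε₀ + t = ε₀ / 2 + lam / (4 * n) := by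
        rw [ht_def]; ring
      rw [this]
      have h1 : ε₀ / 2 < lam / (2 * n) := by
        rw [lt_div_iff₀ (by linarith : (0:ℝ) < 2 * n)]
        rw [lt_div_iff₀ hn0] at key
        nlinarith
      have h2 : lam / (2 * n) + lam / (4 * n) = 3 * lam / (4 * n) := by ring
      linarith
    · have : n * δ + (ε₀ + t) * δ - lam * (n - 1) / 2 = t * δ := by
        have : (ε₀ + t) * δ = ε₀ * δ + t * δ := by ring
        rw [this, hε₀δ]; ring
      rw [this]; positivity
    · have he : n * δ + (ε₀ + t) * δ - lam * (n - 1) / 2 + lam / n - 2 * (ε₀ + t)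
          = t * δ + (lam / n - 2 * ε₀) - 2 * t := by
        have h1 : (ε₀ + t) * δ = ε₀ * δ + t * δ := by ring
        rw [h1, hε₀δ]; ring
      rw [he]
      have h2 : 2 * t = (lam / n - 2 * ε₀) / 2 := by rw [ht_def]; ring
      have h3 : 0 ≤ t * δ := by positivity
      linarith
end
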